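/- arXiv:2405.08583 — 2 statements merged into one kernel-verified Lean document; each statement's English description precedes it below -/
import Mathlib

section
/- Let n ≥ 2, let I ⊆ ℝ be a nondegenerate interval, and let f = (f_1,…,f_n) satisfy condition (⋆) with all f_k increasing. For (d_1,…,d_n) ∈ F(I)ⁿ let c_* := min{F^{-1}(d_1),…,F^{-1}(d_n)} and c^* := max{F^{-1}(d_1),…,F^{-1}(d_n)}, and for k = 1,…,n let α_k := (1/(n−1)) ( (n−2)(g_k(d̄) − d_k) + Σ_{j≠k} (d_j − g_j(d̄)) ), where g_j := f_j ∘ F^{-1} and d̄ := (d_1+…+d_n)/n. Then for every k = 1,…,n, f_k(c_*) + (F(c_*) − F(c^*)) ≤ α_k ≤ f_k(c^*) + (F(c^*) − F(c_*)). -/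
open Finset

/-- Condition (⋆). -/
def CondStar {n : ℕ} (I : Set ℝ) (f : Fin n → ℝ → ℝ) : Prop :=
  (∀ k, ContinuousOn (f k) I) ∧
  ((∀ k, MonotoneOn (f k) I) ∨ (∀ k, AntitoneOn (f k) I)) ∧
  (∀ a b : ℝ, a ∈ I → b ∈ I → a < b →
    ∃ k, ∃ s ∈ Set.Icc a b, ∃ t ∈ Set.Icc a b, f k s ≠ f k t)

/-- `F = f₁ + ⋯ + fₙ`. -/
noncomputable def Fsum {n : ℕ} (f : Fin n → ℝ → ℝ) : ℝ → ℝ := fun t => ∑ k, f k t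

/-- The generalized quasi-arithmetic mean `M_f(x) = F⁻¹(f₁(x₁) + ⋯ + fₙ(xₙ))`. -/
noncomputable def Mf {n : ℕ} (I : Set ℝ) (f : Fin n → ℝ → ℝ) (x : Fin n → ℝ) : ℝ :=
  Function.invFunOn (Fsum f) I (∑ k, f k (x k))

/-- `σ`-balanced means; the paper's `u_k(x,t)` is `Function.update x k t`. -/
def SigmaBalanced {n : ℕ} (I : Set ℝ) (σ : Equiv.Perm (Fin n))
    (M : (Fin n → ℝ) → ℝ) : Prop :=
  ∀ x : Fin n → ℝ, (∀ k, x k ∈ I) →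
    M (fun k => M (Function.update x (σ k) (M x))) = M x

/-- `v_k(x) := M_f(u_k(x, M_f(x)))`. -/
noncomputable def vmap {n : ℕ} (I : Set ℝ) (f : Fin n → ℝ → ℝ) (k : Fin n)
    (x : Fin n → ℝ) : ℝ :=
  Mf I f (Function.update x k (Mf I f x))

/-- `α_k = (1/(n−1)) ( (n−2)(g_k(d̄) − d_k) + ∑_{j≠k} (d_j − g_j(d̄)) )`, where
`g_j := f_j ∘ F⁻¹` and `d̄ := (d_1+⋯+d_n)/n`. -/
noncomputable def alpha {n : ℕ} (I : Set ℝ) (f : Fin n → ℝ → ℝ) (d : Fin n → ℝ)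
    (k : Fin n) : ℝ :=
  (1 / ((n : ℝ) - 1)) *
    (((n : ℝ) - 2) * (f k (Function.invFunOn (Fsum f) I ((∑ j, d j) / n)) - d k) +
      ∑ j ∈ Finset.univ.erase k,
        (d j - f j (Function.invFunOn (Fsum f) I ((∑ i, d i) / n))))

/-!
Let `m := F⁻¹(d̄)`. Since `∑_j g_j(d̄) = d̄` and `∑_j d_j = n d̄`, the definition of `α_k` collapses
to `α_k = f_k(m) + d̄ - d_k`. Every `d_j` lies in `[F(c_*), F(c^*)]`, hence so do `d_k` and the
average `d̄` (the image `F(I)` is an interval, so `m` exists). Since the `f_j` are increasing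
with sum `F`, `F a ≤ F b` forces `f_k a ≤ f_k b`; thus `f_k(c_*) ≤ f_k(m) ≤ f_k(c^*)`, and adding
these bounds gives the claim.
-/

section

variable {n : ℕ} {I : Set ℝ} {f : Fin n → ℝ → ℝ}

theorem Fsum_continuousOn (hcont : ∀ k, ContinuousOn (f k) I) : ContinuousOn (Fsum f) I :=
  continuousOn_finsetSum univ fun k _ => hcont k

theorem Fsum_monotoneOn (hmono : ∀ k, MonotoneOn (f k) I) : MonotoneOn (Fsum f) I :=
  fun _ ha _ hb hab => sum_le_sum fun k _ => hmono k ha hb hab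

theorem convex_image_Fsum (hI : I.OrdConnected) (hcont : ∀ k, ContinuousOn (f k) I) :
    Convex ℝ (Fsum f '' I) :=
  (hI.isPreconnected.image _ (Fsum_continuousOn hcont)).ordConnected.convex

/-- For `a > b`, `F a ≤ F b` forces `F a = F b`, and then `f_j a = f_j b` for every `j`. -/
theorem apply_le_apply_of_Fsum_le (hmono : ∀ k, MonotoneOn (f k) I) {a b : ℝ} (ha : a ∈ I)
    (hb : b ∈ I) (hF : Fsum f a ≤ Fsum f b) (k : Fin n) : f k a ≤ f k b := by
  rcases le_or_gt a b with hab | hba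
  · exact hmono k ha hb hab
  · have hle : ∀ j ∈ univ, f j b ≤ f j a := fun j _ => hmono j hb ha hba.le
    have hsum : ∑ j, f j b = ∑ j, f j a := le_antisymm (sum_le_sum hle) hF
    exact ((sum_eq_sum_iff_of_le hle).1 hsum k (mem_univ k)).ge

theorem Convex.sum_div_card_mem {ι : Type*} [Fintype ι] [Nonempty ι] {s : Set ℝ}
    (hs : Convex ℝ s) {d : ι → ℝ} (hd : ∀ i, d i ∈ s) : (∑ i, d i) / Fintype.card ι ∈ s := by
  have hw : ∑ _i : ι, (Fintype.card ι : ℝ)⁻¹ = 1 := by simp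
  simpa [← smul_eq_mul, ← Finset.smul_sum, div_eq_inv_mul] using
    hs.sum_mem (fun i _ => by positivity) hw fun i _ => hd i

theorem alpha_eq (hn : 2 ≤ n) (d : Fin n → ℝ) (k : Fin n)
    (hm : Fsum f (Function.invFunOn (Fsum f) I ((∑ j, d j) / n)) = (∑ j, d j) / n) :
    alpha I f d k =
      f k (Function.invFunOn (Fsum f) I ((∑ j, d j) / n)) + (∑ j, d j) / n - d k := by
  set m := Function.invFunOn (Fsum f) I ((∑ j, d j) / n)
  have hn' : (2 : ℝ) ≤ n := by exact_mod_cast hn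
  have hsum : ∑ j, f j m = (∑ j, d j) / n := hm
  rw [alpha, sum_erase_eq_sub (mem_univ k), sum_sub_distrib, hsum]
  field_simp [show (n : ℝ) - 1 ≠ 0 by linarith]
  ring

end

/-- with all `f_k` increasing, `c_* := min_k F⁻¹(d_k)`, `c^* := max_k F⁻¹(d_k)`,
one has `f_k(c_*) + (F(c_*) − F(c^*)) ≤ α_k ≤ f_k(c^*) + (F(c^*) − F(c_*))` for every `k`. -/
theorem stmt9 {n : ℕ} (hn : 2 ≤ n) (I : Set ℝ) (hI : I.OrdConnected)
    (f : Fin n → ℝ → ℝ) (hf : CondStar I f) (hmono : ∀ k, MonotoneOn (f k) I)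
    (d : Fin n → ℝ) (hd : ∀ k, d k ∈ Fsum f '' I)
    (cs cS : ℝ)
    (hcs : cs = Finset.univ.inf' ⟨⟨0, by omega⟩, Finset.mem_univ _⟩
      fun k => Function.invFunOn (Fsum f) I (d k))
    (hcS : cS = Finset.univ.sup' ⟨⟨0, by omega⟩, Finset.mem_univ _⟩
      fun k => Function.invFunOn (Fsum f) I (d k)) :
    ∀ k, f k cs + (Fsum f cs - Fsum f cS) ≤ alpha I f d k ∧
      alpha I f d k ≤ f k cS + (Fsum f cS - Fsum f cs) := by
  set c := fun k => Function.invFunOn (Fsum f) I (d k)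
  have hcI : ∀ k, c k ∈ I := fun k => Function.invFunOn_mem (hd k)
  have hFc : ∀ k, Fsum f (c k) = d k := fun k => Function.invFunOn_eq (hd k)
  have : Nonempty (Fin n) := ⟨⟨0, by omega⟩⟩
  have hcsI : cs ∈ I := by
    obtain ⟨k, -, hk⟩ := exists_mem_eq_inf' univ_nonempty c
    exact hcs ▸ hk ▸ hcI k
  have hcSI : cS ∈ I := by
    obtain ⟨k, -, hk⟩ := exists_mem_eq_sup' univ_nonempty c
    exact hcS ▸ hk ▸ hcI k
  have hFmono := Fsum_monotoneOn hmono
  have hdIcc : ∀ k, d k ∈ Set.Icc (Fsum f cs) (Fsum f cS) := fun k =>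
    hFc k ▸ ⟨hFmono hcsI (hcI k) (hcs ▸ inf'_le c (mem_univ k)),
      hFmono (hcI k) hcSI (hcS ▸ le_sup' c (mem_univ k))⟩
  have hdbar : (∑ j, d j) / n ∈ Set.Icc (Fsum f cs) (Fsum f cS) := by
    simpa using (convex_Icc _ _).sum_div_card_mem hdIcc
  have hdbarI : (∑ j, d j) / n ∈ Fsum f '' I := by
    simpa using (convex_image_Fsum hI hf.1).sum_div_card_mem hd
  have hmI := Function.invFunOn_mem hdbarI
  have hFm := Function.invFunOn_eq hdbarI
  intro k
  have hlow := apply_le_apply_of_Fsum_le hmono hcsI hmI (hdbar.1.trans hFm.ge) k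
  have hupp := apply_le_apply_of_Fsum_le hmono hmI hcSI (hFm.le.trans hdbar.2) k
  rw [alpha_eq hn d k hFm]
  exact ⟨by linarith [(hdIcc k).2, hdbar.1], by linarith [(hdIcc k).1, hdbar.2]⟩
end

section
/- Let n ≥ 2, let I ⊆ ℝ be a nondegenerate interval, let f = (f_1,…,f_n) satisfy condition (⋆), and let σ be a bijection of {1,…,n}. If the generalized quasi-arithmetic mean M_f is σ-balanced, then for every x = (x_1,…,x_n) ∈ Iⁿ and every k = 1,…,n one has F(v_{σ(k)}(x)) = f_{σ(k)}(M_f(x)) + Σ_{j=1}^{n} f_j(v_{σ(j)}(x)) − f_{σ(k)}(x_{σ(k)}), where v_k(x) := M_f(u_k(x, M_f(x))). -/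
open Finset

/-!
`F (M_f y) = ∑ₖ fₖ (yₖ)` for every `y ∈ Iⁿ`, because that sum lies between `F (min y)`
and `F (max y)` and `F` is continuous on the interval `I`. Applied to `u_i(x, M_f x)` this gives
`F (v_i x) = f_i (M_f x) + F (M_f x) - f_i (x_i)`, and applied to `(v_{σ(1)} x, …, v_{σ(n)} x)`,
whose mean is `M_f x` by `σ`-balance, it gives `F (M_f x) = ∑ⱼ f_j (v_{σ(j)} x)`.
-/

lemma Fintype.sum_apply_update {ι M : Type*} [Fintype ι] [DecidableEq ι] [AddCommGroup M]
    {α : Type*} (g : ι → α → M) (x : ι → α) (i : ι) (t : α) :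
    ∑ j, g j (Function.update x i t j) = g i t + ∑ j, g j (x j) - g i (x i) := by
  simp_rw [Function.apply_update g x i t]
  rw [Finset.sum_update_of_mem (Finset.mem_univ i), Finset.sdiff_singleton_eq_erase,
    Finset.sum_erase_eq_sub (Finset.mem_univ i)]
  abel

section QuasiArithmeticMean

variable {n : ℕ} {I : Set ℝ} {f : Fin n → ℝ → ℝ}

lemma sum_apply_mem_uIcc_Fsum (hmono : (∀ k, MonotoneOn (f k) I) ∨ (∀ k, AntitoneOn (f k) I))
    {y : Fin n → ℝ} (hy : ∀ k, y k ∈ I) {a b : ℝ} (ha : a ∈ I) (hb : b ∈ I)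
    (hay : ∀ k, a ≤ y k) (hyb : ∀ k, y k ≤ b) :
    ∑ k, f k (y k) ∈ Set.uIcc (Fsum f a) (Fsum f b) := by
  rw [Set.mem_uIcc]
  rcases hmono with hm | hm
  · exact .inl ⟨Finset.sum_le_sum fun k _ => hm k ha (hy k) (hay k),
      Finset.sum_le_sum fun k _ => hm k (hy k) hb (hyb k)⟩
  · exact .inr ⟨Finset.sum_le_sum fun k _ => hm k (hy k) hb (hyb k),
      Finset.sum_le_sum fun k _ => hm k ha (hy k) (hay k)⟩

lemma sum_apply_mem_image_Fsum [NeZero n] (hI : I.OrdConnected)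
    (hc : ∀ k, ContinuousOn (f k) I)
    (hmono : (∀ k, MonotoneOn (f k) I) ∨ (∀ k, AntitoneOn (f k) I))
    {y : Fin n → ℝ} (hy : ∀ k, y k ∈ I) :
    ∑ k, f k (y k) ∈ Fsum f '' I := by
  obtain ⟨i, hi⟩ := Finite.exists_min y
  obtain ⟨j, hj⟩ := Finite.exists_max y
  have hsub : Set.uIcc (y i) (y j) ⊆ I := hI.uIcc_subset (hy i) (hy j)
  have hcont : ContinuousOn (Fsum f) (Set.uIcc (y i) (y j)) :=
    continuousOn_finsetSum _ fun k _ => (hc k).mono hsub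
  exact Set.image_mono hsub <| intermediate_value_uIcc hcont <|
    sum_apply_mem_uIcc_Fsum hmono hy (hy i) (hy j) hi hj

lemma Mf_mem [NeZero n] (hI : I.OrdConnected) (hc : ∀ k, ContinuousOn (f k) I)
    (hmono : (∀ k, MonotoneOn (f k) I) ∨ (∀ k, AntitoneOn (f k) I))
    {y : Fin n → ℝ} (hy : ∀ k, y k ∈ I) :
    Mf I f y ∈ I :=
  Function.invFunOn_mem (sum_apply_mem_image_Fsum hI hc hmono hy)

lemma Fsum_Mf [NeZero n] (hI : I.OrdConnected) (hc : ∀ k, ContinuousOn (f k) I)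
    (hmono : (∀ k, MonotoneOn (f k) I) ∨ (∀ k, AntitoneOn (f k) I))
    {y : Fin n → ℝ} (hy : ∀ k, y k ∈ I) :
    Fsum f (Mf I f y) = ∑ k, f k (y k) :=
  Function.invFunOn_eq (sum_apply_mem_image_Fsum hI hc hmono hy)

end QuasiArithmeticMean

theorem stmt17_general {n : ℕ} (I : Set ℝ) (hI : I.OrdConnected)
    (f : Fin n → ℝ → ℝ) (hf : CondStar I f) (σ : Equiv.Perm (Fin n))
    (hbal : SigmaBalanced I σ (Mf I f)) :
    ∀ x : Fin n → ℝ, (∀ k, x k ∈ I) → ∀ k : Fin n,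
      Fsum f (vmap I f (σ k) x) =
        f (σ k) (Mf I f x) + (∑ j, f j (vmap I f (σ j) x)) - f (σ k) (x (σ k)) := by
  intro x hx k
  have : NeZero n := ⟨k.pos.ne'⟩
  obtain ⟨hc, hmono, -⟩ := hf
  have hu : Mf I f x ∈ I := Mf_mem hI hc hmono hx
  have hupd (i : Fin n) : ∀ j, Function.update x i (Mf I f x) j ∈ I :=
    Function.forall_update_iff x (p := fun _ t => t ∈ I) |>.mpr ⟨hu, fun j _ => hx j⟩
  have hv (i : Fin n) : vmap I f i x ∈ I := Mf_mem hI hc hmono (hupd i)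
  have hFv (i : Fin n) :
      Fsum f (vmap I f i x) = f i (Mf I f x) + Fsum f (Mf I f x) - f i (x i) := by
    rw [vmap, Fsum_Mf hI hc hmono (hupd i), Fintype.sum_apply_update, Fsum_Mf hI hc hmono hx]
  have hFbal : Fsum f (Mf I f x) = ∑ j, f j (vmap I f (σ j) x) := by
    conv_lhs => rw [← hbal x hx]
    exact Fsum_Mf hI hc hmono fun j => hv (σ j)
  rw [hFv, hFbal]

/-- if `M_f` is `σ`-balanced, then for all `x ∈ Iⁿ` and every `k`,
`F(v_{σ(k)}(x)) = f_{σ(k)}(M_f(x)) + ∑_j f_j(v_{σ(j)}(x)) − f_{σ(k)}(x_{σ(k)})`. -/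
theorem stmt17 {n : ℕ} (hn : 2 ≤ n) (I : Set ℝ) (hI : I.OrdConnected)
    (hne : ∃ a ∈ I, ∃ b ∈ I, a < b)
    (f : Fin n → ℝ → ℝ) (hf : CondStar I f) (σ : Equiv.Perm (Fin n))
    (hbal : SigmaBalanced I σ (Mf I f)) :
    ∀ x : Fin n → ℝ, (∀ k, x k ∈ I) → ∀ k : Fin n,
      Fsum f (vmap I f (σ k) x) =
        f (σ k) (Mf I f x) + (∑ j, f j (vmap I f (σ j) x)) - f (σ k) (x (σ k)) :=
  stmt17_general I hI f hf σ hbal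
end
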